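/- Fix positive integers n and N, an integer r with 0 ≤ r ≤ n, a real p with 0 < p < 1, a point x : Fin n → Bool, and a subset E ⊆ Fin n with |E| = r. For every x̃ : Fin n → Bool with x̃ ≠ x and every j ∈ {1,…,N}, let e_{x̃,j} be an erasure pattern of length n with parameter p, all of these patterns mutually independent. Then the expectation of (N - 1) + Σ_{x̃ ≠ x} Σ_{j=1}^{N} 1[for every i ∉ E with x i ≠ x̃ i, e_{x̃,j} i = true] equals N·2^r·(1+p)^{n-r} - 1. -/

import Mathlib

/-!
By linearity of expectation, each address `x̃` contributes `N` times the probability that its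
pattern erases the `d(x̃)` positions outside `E` where `x` and `x̃` differ, namely `p ^ d(x̃)`.
Summed over all `x̃`, the weight `p ^ d(x̃)` factors over coordinates: a position in `E`
contributes `1 + 1`, a position outside `E` contributes `1 + p`. The term `x̃ = x` equals `1`.
-/

open MeasureTheory Finset

noncomputable def bernoulliMeasure (p : ℝ) : Measure Bool :=
  ENNReal.ofReal p • Measure.dirac true + ENNReal.ofReal (1 - p) • Measure.dirac false

noncomputable def erasureMeasure (n : ℕ) (p : ℝ) : Measure (Fin n → Bool) :=
  Measure.pi fun _ : Fin n => bernoulliMeasure p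

lemma isProbabilityMeasure_bernoulliMeasure {p : ℝ} (hp0 : 0 ≤ p) (hp1 : p ≤ 1) :
    IsProbabilityMeasure (bernoulliMeasure p) :=
  ⟨by simp [bernoulliMeasure, ← ENNReal.ofReal_add hp0 (sub_nonneg.2 hp1)]⟩

lemma bernoulliMeasure_singleton_true (p : ℝ) :
    bernoulliMeasure p {true} = ENNReal.ofReal p := by
  simp [bernoulliMeasure]

lemma erasureMeasure_real_forall_imp {n : ℕ} {p : ℝ} (hp0 : 0 ≤ p) (hp1 : p ≤ 1)
    (D : Fin n → Prop) [DecidablePred D] :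
    (erasureMeasure n p).real {e | ∀ i, D i → e i = true} = p ^ #{i | D i} := by
  have := isProbabilityMeasure_bernoulliMeasure hp0 hp1
  have hcylinder : {e : Fin n → Bool | ∀ i, D i → e i = true}
      = Set.univ.pi fun i => if D i then {true} else Set.univ := by
    ext e
    simp only [Set.mem_ofPred_eq, Set.mem_univ_pi]
    refine forall_congr' fun i => ?_
    split_ifs <;> simp [*]
  have hfactor : ∀ i, bernoulliMeasure p (if D i then {true} else Set.univ)
      = if D i then ENNReal.ofReal p else 1 := by
    intro i
    split_ifs
    · exact bernoulliMeasure_singleton_true p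
    · exact measure_univ
  rw [measureReal_def, hcylinder, erasureMeasure, Measure.pi_pi]
  simp only [hfactor, ← prod_filter, prod_const, ENNReal.toReal_pow, ENNReal.toReal_ofReal hp0]

lemma sum_pow_card_filter_ne {n : ℕ} (p : ℝ) (x : Fin n → Bool) (E : Finset (Fin n)) :
    ∑ x' : Fin n → Bool, p ^ #{i | i ∉ E ∧ x i ≠ x' i} = 2 ^ #E * (1 + p) ^ (n - #E) := by
  have hprod : ∀ x' : Fin n → Bool,
      p ^ #{i | i ∉ E ∧ x i ≠ x' i} = ∏ i, if i ∉ E ∧ x i ≠ x' i then p else 1 := by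
    intro x'
    rw [← prod_filter, prod_const]
  have hfactor : ∀ i, (∑ b : Bool, if i ∉ E ∧ x i ≠ b then p else 1)
      = if i ∈ E then 2 else 1 + p := by
    intro i
    by_cases hi : i ∈ E
    · simp [hi]
    · cases x i <;> simp [hi, add_comm]
  simp_rw [hprod]
  rw [← Fintype.prod_sum fun i b => if i ∉ E ∧ x i ≠ b then p else 1]
  simp_rw [hfactor]
  rw [prod_ite, prod_const, prod_const]
  simp [filter_notMem_eq_sdiff, ← compl_eq_univ_sdiff, card_compl]

lemma integral_ite_one_zero {α : Type*} [MeasurableSpace α] (μ : Measure α) {P : α → Prop}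
    [DecidablePred P] (hP : MeasurableSet {a | P a}) :
    ∫ a, (if P a then (1 : ℝ) else 0) ∂μ = μ.real {a | P a} := by
  rw [← integral_indicator_one hP]
  congr with a
  simp [Set.indicator_apply]

lemma integral_ite_comp_eval {ι : Type*} [Fintype ι] {α : ι → Type*} [∀ i, MeasurableSpace (α i)]
    (μ : ∀ i, Measure (α i)) [∀ i, IsProbabilityMeasure (μ i)] (k : ι) {P : α k → Prop}
    [DecidablePred P] (hP : MeasurableSet {a | P a}) :
    ∫ ω, (if P (ω k) then (1 : ℝ) else 0) ∂Measure.pi μ = (μ k).real {a | P a} := by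
  rw [integral_comp_eval
      (stronglyMeasurable_const.ite hP stronglyMeasurable_const).aestronglyMeasurable,
    integral_ite_one_zero _ hP]

theorem stmt_12_general (n N : ℕ) (r : ℕ)
    (p : ℝ) (hp0 : 0 < p) (hp1 : p < 1) (x : Fin n → Bool)
    (E : Finset (Fin n)) (hE : E.card = r) :
    (∫ ω : {x' : Fin n → Bool // x' ≠ x} × Fin N → (Fin n → Bool),
      (((N : ℝ) - 1) + ∑ x' : {x' : Fin n → Bool // x' ≠ x}, ∑ j : Fin N,
        (if ∀ i : Fin n, i ∉ E → x i ≠ x'.1 i → ω (x', j) i = true then (1 : ℝ) else 0))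
      ∂(Measure.pi fun _ : {x' : Fin n → Bool // x' ≠ x} × Fin N => erasureMeasure n p))
      = (N : ℝ) * 2 ^ r * (1 + p) ^ (n - r) - 1 := by
  classical
  have := isProbabilityMeasure_bernoulliMeasure hp0.le hp1.le
  have : IsProbabilityMeasure (erasureMeasure n p) := by unfold erasureMeasure; infer_instance
  have hcoord : ∀ (x' : {x' : Fin n → Bool // x' ≠ x}) (j : Fin N),
      ∫ ω : {x' : Fin n → Bool // x' ≠ x} × Fin N → (Fin n → Bool),
        (if ∀ i : Fin n, i ∉ E → x i ≠ x'.1 i → ω (x', j) i = true then (1 : ℝ) else 0)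
        ∂(Measure.pi fun _ => erasureMeasure n p) = p ^ #{i | i ∉ E ∧ x i ≠ x'.1 i} := by
    intro x' j
    rw [← erasureMeasure_real_forall_imp hp0.le hp1.le fun i => i ∉ E ∧ x i ≠ x'.1 i]
    simp_rw [and_imp]
    exact integral_ite_comp_eval (fun _ => erasureMeasure n p) (x', j)
      (P := fun e : Fin n → Bool => ∀ i, i ∉ E → x i ≠ x'.1 i → e i = true)
      MeasurableSet.of_discrete
  have hsum : ∑ x' : {x' : Fin n → Bool // x' ≠ x}, p ^ #{i | i ∉ E ∧ x i ≠ x'.1 i}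
      = 2 ^ r * (1 + p) ^ (n - r) - 1 := by
    rw [← hE, ← sum_pow_card_filter_ne p x E, Fintype.sum_eq_add_sum_subtype_ne _ x]
    simp
  rw [integral_add (integrable_const _) Integrable.of_finite, integral_const,
    integral_finsetSum _ fun _ _ => Integrable.of_finite]
  simp only [integral_finsetSum _ fun _ _ => Integrable.of_finite, hcoord]
  simp [← mul_sum, hsum]
  ring

/-- Fix `x : Fin n → Bool` and a set `E ⊆ Fin n` of `r` erased positions.
For each address `x̃ ≠ x` and each `j ∈ {1,…,N}`, let `e_{x̃,j}` be an independent erasure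
pattern of length `n` with parameter `p`.  Then the expectation of
`(N-1) + Σ_{x̃ ≠ x} Σ_{j=1}^{N} 1[∀ i ∉ E with x i ≠ x̃ i, e_{x̃,j} i = true]`
equals `N·2^r·(1+p)^{n-r} - 1`. -/
theorem stmt_12 (n N : ℕ) (hn : 0 < n) (hN : 0 < N) (r : ℕ) (hr : r ≤ n)
    (p : ℝ) (hp0 : 0 < p) (hp1 : p < 1) (x : Fin n → Bool)
    (E : Finset (Fin n)) (hE : E.card = r) :
    (∫ ω : {x' : Fin n → Bool // x' ≠ x} × Fin N → (Fin n → Bool),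
      (((N : ℝ) - 1) + ∑ x' : {x' : Fin n → Bool // x' ≠ x}, ∑ j : Fin N,
        (if ∀ i : Fin n, i ∉ E → x i ≠ x'.1 i → ω (x', j) i = true then (1 : ℝ) else 0))
      ∂(Measure.pi fun _ : {x' : Fin n → Bool // x' ≠ x} × Fin N => erasureMeasure n p))
      = (N : ℝ) * 2 ^ r * (1 + p) ^ (n - r) - 1 :=
  stmt_12_general n N r p hp0 hp1 x E hE
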